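/- arXiv:math/9802110 — 3 statements merged into one kernel-verified Lean document; each statement's English description precedes it below -/
import Mathlib

section
/- Let H be a self-adjoint operator on a finite-dimensional complex inner product space, T a linear operator on the same space with rank T ≤ p, and μ ∈ ℝ such that ⟨(H + T) f, f⟩ ≥ μ ⟨f, f⟩ for all f. Then for every ε > 0, the number of eigenvalues of H strictly less than μ − ε (equivalently, ≤ μ − ε) is at most p. -/
open Module
open scoped InnerProductSpace

/-!
On the span `W` of the eigenspaces of `H` for eigenvalues `≤ μ - ε` the form `⟪H g, g⟫` is at most
`(μ - ε) ‖g‖²`, while on `ker T` it is at least `μ ‖g‖²`. Hence `W ⊓ ker T = 0`, so `T` is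
injective on `W` and `dim W ≤ rank T ≤ p`.
-/

theorem LinearMap.finrank_le_finrank_range_of_disjoint_ker {K V W : Type*} [DivisionRing K]
    [AddCommGroup V] [Module K V] [AddCommGroup W] [Module K W] {U : Submodule K V}
    [FiniteDimensional K V] (T : V →ₗ[K] W) (h : Disjoint U (LinearMap.ker T)) :
    finrank K U ≤ finrank K (LinearMap.range T) := by
  rw [← LinearMap.finrank_range_of_inj (LinearMap.injective_domRestrict_iff.mpr h)]
  exact Submodule.finrank_mono (LinearMap.range_domRestrict_le_range T U)

theorem LinearMap.IsSymmetric.re_inner_apply_self_le_of_mem_iSup_eigenspace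
    {𝕜 E : Type*} [RCLike 𝕜] [NormedAddCommGroup E] [InnerProductSpace 𝕜 E]
    {H : E →ₗ[𝕜] E} (hH : H.IsSymmetric) {c : ℝ} {x : E}
    (hx : x ∈ ⨆ lam : ℝ, ⨆ _ : lam ≤ c, Module.End.eigenspace H (lam : 𝕜)) :
    RCLike.re ⟪H x, x⟫_𝕜 ≤ c * ‖x‖ ^ 2 := by
  classical
  -- Along the pairwise orthogonal eigenspaces, `⟪H x, x⟫ = ∑ λ ‖x_λ‖²` and `‖x‖² = ∑ ‖x_λ‖²`.
  rw [iSup_subtype'] at hx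
  obtain ⟨v, rfl⟩ := (Submodule.mem_iSup_iff_exists_dfinsupp' _ x).mp hx
  have horth := hH.orthogonalFamily_eigenspaces.comp
    (f := fun lam : {lam : ℝ // lam ≤ c} => (lam : 𝕜))
    (fun a b h => Subtype.ext (RCLike.ofReal_injective h))
  have hHv : ∀ lam, H (v lam) = ((lam : ℝ) : 𝕜) • (v lam : E) := fun lam =>
    Module.End.mem_eigenspace_iff.mp (v lam).2
  have hnorm := horth.norm_sum v v.support
  have hinner := horth.inner_sum (fun lam => ((lam : ℝ) : 𝕜) • v lam) v v.support
  simp only [Submodule.coe_subtypeₗᵢ, Submodule.subtype_apply, Submodule.coe_smul] at hnorm hinner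
  simp only [DFinsupp.sum, map_sum, hHv, hinner, hnorm, Finset.mul_sum]
  refine Finset.sum_le_sum fun lam _ => ?_
  rw [inner_smul_left, inner_self_eq_norm_sq_to_K, RCLike.conj_ofReal, ← RCLike.ofReal_pow,
    ← RCLike.ofReal_mul, RCLike.ofReal_re]
  exact mul_le_mul_of_nonneg_right lam.2 (sq_nonneg _)

/-- A rank-`p` perturbation `T` making `H + T ≥ μ` bounds the counting
function of eigenvalues of `H` below `μ - ε` by `p`. -/
theorem stmt_2
    (V : Type) [NormedAddCommGroup V] [InnerProductSpace ℂ V]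
    [FiniteDimensional ℂ V]
    (H T : V →ₗ[ℂ] V) (hH : LinearMap.IsSymmetric H)
    (p : ℕ) (hT : finrank ℂ (LinearMap.range T) ≤ p)
    (μ : ℝ)
    (hlow : ∀ f : V, μ * ‖f‖ ^ 2 ≤ (⟪(H + T) f, f⟫_ℂ).re) :
    ∀ ε : ℝ, 0 < ε →
      finrank ℂ ↥(⨆ lam : ℝ, ⨆ _ : lam ≤ μ - ε,
        Module.End.eigenspace H (lam : ℂ)) ≤ p := by
  intro ε hε
  refine le_trans (T.finrank_le_finrank_range_of_disjoint_ker ?_) hT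
  refine Submodule.disjoint_def.mpr fun g hg hTg => ?_
  have upper : (⟪H g, g⟫_ℂ).re ≤ (μ - ε) * ‖g‖ ^ 2 :=
    hH.re_inner_apply_self_le_of_mem_iSup_eigenspace hg
  have lower : μ * ‖g‖ ^ 2 ≤ (⟪H g, g⟫_ℂ).re := by
    simpa [LinearMap.mem_ker.mp hTg] using hlow g
  have : ‖g‖ ^ 2 ≤ 0 := by nlinarith
  simpa using this
end

section
/- Let H be a self-adjoint operator on a finite-dimensional complex inner product space V, and let T : V → V be linear with ⟨(H+T)f, f⟩ ≥ μ⟨f,f⟩ for all f ∈ V. Let E be the sum of the eigenspaces of H corresponding to eigenvalues < μ. Then dim E ≤ rank T. -/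
open Module
open scoped InnerProductSpace

/-- If `⟪(H + T) f, f⟫ ≥ μ ⟪f, f⟫` for all `f`, then the sum `E` of the
eigenspaces of the self-adjoint operator `H` for eigenvalues strictly less
than `μ` satisfies `dim E ≤ rank T`. -/
theorem stmt_3
    (V : Type) [NormedAddCommGroup V] [InnerProductSpace ℂ V]
    [FiniteDimensional ℂ V]
    (H T : V →ₗ[ℂ] V) (hH : LinearMap.IsSymmetric H)
    (μ : ℝ)
    (hlow : ∀ f : V, μ * ‖f‖ ^ 2 ≤ (⟪(H + T) f, f⟫_ℂ).re) :
    finrank ℂ ↥(⨆ lam : ℝ, ⨆ _ : lam < μ,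
        Module.End.eigenspace H (lam : ℂ)) ≤
      finrank ℂ (LinearMap.range T) := by
  classical
  set E : Submodule ℂ V := ⨆ lam : ℝ, ⨆ _ : lam < μ,
      Module.End.eigenspace H (lam : ℂ) with hE
  have hE' : E = ⨆ l : {l : ℝ // l < μ}, Module.End.eigenspace H ((l : ℝ) : ℂ) := by
    rw [hE, iSup_subtype]
  -- any eigenvalue of `H` with an eigenvector in `E` is `< μ`
  have hbound : ∀ (c : ℝ) (v : V), v ∈ E →
      v ∈ Module.End.eigenspace H (c : ℂ) → v ≠ 0 → c < μ := by
    intro c v hvE hvc hv0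
    by_contra hc
    push_neg at hc
    have horth : ∀ u ∈ E, ⟪u, v⟫_ℂ = 0 := by
      intro u hu
      rw [hE'] at hu
      induction hu using Submodule.iSup_induction' with
      | mem l u hu =>
          have hne : ((l : ℝ) : ℂ) ≠ (c : ℂ) := by
            exact_mod_cast ne_of_lt (lt_of_lt_of_le l.2 hc)
          exact hH.orthogonalFamily_eigenspaces hne ⟨u, hu⟩ ⟨v, hvc⟩
      | zero => simp
      | add x hx y hy ihx ihy => rw [inner_add_left, ihx, ihy, add_zero]
    exact hv0 (inner_self_eq_zero.mp (horth v hvE))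
  -- `E` is invariant under `H`
  have hinv : ∀ u ∈ E, H u ∈ E := by
    intro u hu
    rw [hE'] at hu ⊢
    induction hu using Submodule.iSup_induction' with
    | mem l u hu =>
        refine le_iSup (fun l : {l : ℝ // l < μ} =>
          Module.End.eigenspace H ((l : ℝ) : ℂ)) l ?_
        rw [Module.End.mem_eigenspace_iff] at hu ⊢
        rw [hu, map_smul, hu]
    | zero => simp
    | add a b ha hb iha ihb =>
        rw [map_add]; exact Submodule.add_mem _ iha ihb
  set H' : E →ₗ[ℂ] E := H.restrict hinv with hH'def
  have hH' : H'.IsSymmetric := by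
    intro x y
    have := hH x y
    simpa [hH'def, Submodule.coe_inner, LinearMap.restrict_coe_apply] using hH x y
  -- key estimate: for nonzero `f ∈ E`, the Rayleigh quotient is `< μ`
  have key : ∀ f : V, f ∈ E → f ≠ 0 → (⟪H f, f⟫_ℂ).re < μ * ‖f‖ ^ 2 := by
    intro f hfE hf0
    set g : E := ⟨f, hfE⟩ with hg
    have hg0 : g ≠ 0 := by
      simpa [hg, Submodule.mk_eq_zero] using hf0
    haveI : Nontrivial E := ⟨g, 0, hg0⟩
    set c : ℝ := ⨆ x : {x : E // x ≠ 0},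
        RCLike.re ⟪H' x, x⟫_ℂ / ‖(x : E)‖ ^ 2 with hc
    have heig := hH'.hasEigenvalue_iSup_of_finiteDimensional
    obtain ⟨v, hvc, hv0⟩ := heig.exists_hasEigenvector
    have hvE : (v : V) ∈ Module.End.eigenspace H ((c : ℝ) : ℂ) := by
      rw [Module.End.mem_eigenspace_iff]
      rw [Module.End.mem_eigenspace_iff] at hvc
      have := congrArg (Subtype.val) hvc
      simpa [hH'def, LinearMap.restrict_coe_apply, hc] using this
    have hv0' : (v : V) ≠ 0 := by
      simpa [Submodule.coe_eq_zero] using hv0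
    have hcμ : c < μ := hbound c v v.2 hvE hv0'
    -- Rayleigh quotient of `g` is at most `c`
    have hbdd : BddAbove (Set.range fun x : {x : E // x ≠ 0} =>
        RCLike.re ⟪H' x, x⟫_ℂ / ‖(x : E)‖ ^ 2) := by
      refine ⟨‖LinearMap.toContinuousLinearMap H'‖, ?_⟩
      rintro _ ⟨x, rfl⟩
      have hx0 : (0 : ℝ) < ‖(x : E)‖ ^ 2 := by
        have : ‖(x : E)‖ ≠ 0 := norm_ne_zero_iff.mpr x.2
        positivity
      rw [div_le_iff₀ hx0]
      calc RCLike.re ⟪H' x, x⟫_ℂ ≤ ‖⟪H' ↑x, (x : E)⟫_ℂ‖ := by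
            exact RCLike.re_le_norm _
        _ ≤ ‖H' (x : E)‖ * ‖(x : E)‖ := norm_inner_le_norm _ _
        _ = ‖LinearMap.toContinuousLinearMap H' (x : E)‖ * ‖(x : E)‖ := rfl
        _ ≤ (‖LinearMap.toContinuousLinearMap H'‖ * ‖(x : E)‖) * ‖(x : E)‖ := by
            gcongr
            exact (LinearMap.toContinuousLinearMap H').le_opNorm _
        _ = ‖LinearMap.toContinuousLinearMap H'‖ * ‖(x : E)‖ ^ 2 := by ring
    have hray : RCLike.re ⟪H' g, g⟫_ℂ / ‖(g : E)‖ ^ 2 ≤ c :=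
      le_ciSup hbdd (⟨g, hg0⟩ : {x : E // x ≠ 0})
    have hgnorm : (0 : ℝ) < ‖(g : E)‖ ^ 2 := by
      have : ‖(g : E)‖ ≠ 0 := norm_ne_zero_iff.mpr hg0
      positivity
    have h1 : RCLike.re ⟪H' g, g⟫_ℂ ≤ c * ‖(g : E)‖ ^ 2 := by
      rw [← div_le_iff₀ hgnorm] at *
      exact hray
    have h2 : RCLike.re ⟪H' g, g⟫_ℂ = (⟪H f, f⟫_ℂ).re := by
      simp [hH'def, Submodule.coe_inner, LinearMap.restrict_coe_apply, hg, RCLike.re]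
    have h3 : ‖(g : E)‖ = ‖f‖ := rfl
    calc (⟪H f, f⟫_ℂ).re = RCLike.re ⟪H' g, g⟫_ℂ := h2.symm
      _ ≤ c * ‖(g : E)‖ ^ 2 := h1
      _ < μ * ‖(g : E)‖ ^ 2 := by
          exact mul_lt_mul_of_pos_right hcμ hgnorm
      _ = μ * ‖f‖ ^ 2 := by rw [h3]
  -- dimension count
  by_contra hlt
  push_neg at hlt
  have hrn := LinearMap.finrank_range_add_finrank_ker T
  have hsum := Submodule.finrank_sup_add_finrank_inf_eq E (LinearMap.ker T)
  have hle : finrank ℂ ↥(E ⊔ LinearMap.ker T) ≤ finrank ℂ V :=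
    Submodule.finrank_le _
  have hpos : 0 < finrank ℂ ↥(E ⊓ LinearMap.ker T) := by omega
  haveI : Nontrivial ↥(E ⊓ LinearMap.ker T) := Module.finrank_pos_iff.mp hpos
  obtain ⟨x, hx0⟩ := exists_ne (0 : ↥(E ⊓ LinearMap.ker T))
  have hf0 : (x : V) ≠ 0 := by simpa [Submodule.coe_eq_zero] using hx0
  have hfE : (x : V) ∈ E := x.2.1
  have hfK : T (x : V) = 0 := x.2.2
  have := hlow (x : V)
  rw [LinearMap.add_apply, hfK, add_zero] at this
  exact absurd this (not_le.mpr (key _ hfE hf0))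
end

section
/- Let V be a finite-dimensional complex inner product space, (J_γ)_{γ∈G} a finite family of self-adjoint operators with ∑_γ J_γ² = Id, H a self-adjoint operator, and suppose ‖[J_γ,[J_γ,H]]‖-type error is controlled: specifically assume H = ∑_γ J_γ H J_γ − R with R self-adjoint and R ≤ ε·Id. If for each γ there are self-adjoint operators T_γ with J_γ H J_γ + T_γ ≥ λ J_γ² (as forms), then H + ∑_γ T_γ ≥ (λ − ε)·Id, and consequently N(λ − ε − δ, H) ≤ ∑_γ rank T_γ for every δ > 0. -/
open Module
open scoped InnerProductSpace

section aux

variable {V : Type} [NormedAddCommGroup V] [InnerProductSpace ℂ V]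
  [FiniteDimensional ℂ V]

lemma stmt17_cre (x : V) : (⟪x, x⟫_ℂ).re = ‖x‖ ^ 2 := by
  exact inner_self_eq_norm_sq (𝕜 := ℂ) x

lemma stmt17_rank_sum_le {ι : Type*} (s : Finset ι) (T : ι → V →ₗ[ℂ] V) :
    finrank ℂ (LinearMap.range (∑ γ ∈ s, T γ)) ≤
      ∑ γ ∈ s, finrank ℂ (LinearMap.range (T γ)) := by
  classical
  induction s using Finset.induction with
  | empty =>
    simp
    exact Submodule.finrank_eq_zero.mpr (LinearMap.range_eq_bot.mpr rfl)
  | @insert a s ha ih =>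
    rw [Finset.sum_insert ha, Finset.sum_insert ha]
    have hle : LinearMap.range (T a + ∑ γ ∈ s, T γ) ≤
        LinearMap.range (T a) ⊔ LinearMap.range (∑ γ ∈ s, T γ) := by
      rintro x ⟨y, rfl⟩
      exact Submodule.add_mem_sup ⟨y, rfl⟩ ⟨y, rfl⟩
    have h1 := Submodule.finrank_mono (s := LinearMap.range (T a + ∑ γ ∈ s, T γ)) hle
    have h2 := Submodule.finrank_sup_add_finrank_inf_eq
      (LinearMap.range (T a)) (LinearMap.range (∑ γ ∈ s, T γ))
    omega

lemma stmt17_aux_inner_le (H : V →ₗ[ℂ] V) (hH : LinearMap.IsSymmetric H) (c : ℝ) (f : V)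
    (hf : f ∈ ⨆ μ : ℝ, ⨆ _ : μ ≤ c, Module.End.eigenspace H (μ : ℂ)) :
    (⟪H f, f⟫_ℂ).re ≤ c * ‖f‖ ^ 2 := by
  rw [iSup_subtype'] at hf
  obtain ⟨a, ha, rfl⟩ := (Submodule.mem_iSup_iff_exists_finsupp _ _).mp hf
  set s := a.support with hs
  have hsum : (a.sum fun _ v => v) = ∑ i ∈ s, a i := rfl
  have hHa : ∀ i : {μ : ℝ // μ ≤ c}, H (a i) = ((i : ℝ) : ℂ) • a i :=
    fun i => Module.End.mem_eigenspace_iff.mp (ha i)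
  have horth : ∀ i j : {μ : ℝ // μ ≤ c}, i ≠ j → ⟪a i, a j⟫_ℂ = 0 := by
    intro i j hij
    have hij' : ((i : ℝ) : ℂ) ≠ ((j : ℝ) : ℂ) := by
      intro h
      exact hij (Subtype.ext (by exact_mod_cast h))
    exact hH.orthogonalFamily_eigenspaces hij' ⟨a i, ha i⟩ ⟨a j, ha j⟩
  have e1 : ⟪H (a.sum fun _ v => v), a.sum fun _ v => v⟫_ℂ
      = ∑ i ∈ s, ((i : ℝ) : ℂ) * ⟪a i, a i⟫_ℂ := by
    rw [hsum, map_sum, sum_inner]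
    refine Finset.sum_congr rfl fun i hi => ?_
    rw [inner_sum, Finset.sum_eq_single i]
    · rw [hHa, inner_smul_left, Complex.conj_ofReal]
    · intro j hj hne
      rw [hHa, inner_smul_left, horth i j (fun h => hne h.symm), mul_zero]
    · intro h; exact absurd hi h
  have e2 : ⟪(a.sum fun _ v => v), a.sum fun _ v => v⟫_ℂ
      = ∑ i ∈ s, ⟪a i, a i⟫_ℂ := by
    rw [hsum, sum_inner]
    refine Finset.sum_congr rfl fun i hi => ?_
    rw [inner_sum, Finset.sum_eq_single i]
    · intro j hj hne
      exact horth i j (fun h => hne h.symm)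
    · intro h; exact absurd hi h
  have hnorm : ‖(a.sum fun _ v => v)‖ ^ 2 = ∑ i ∈ s, ‖a i‖ ^ 2 := by
    rw [← stmt17_cre, e2, Complex.re_sum]
    exact Finset.sum_congr rfl fun i _ => stmt17_cre _
  rw [e1, Complex.re_sum, hnorm, Finset.mul_sum]
  refine Finset.sum_le_sum fun i _ => ?_
  rw [Complex.re_ofReal_mul, stmt17_cre]
  exact mul_le_mul_of_nonneg_right i.2 (sq_nonneg _)

end aux

/-- Abstract localization estimate: if `H = ∑ J_γ H J_γ - R` with
`R ≤ ε·Id` (IMS decomposition) and local corrections `T_γ` satisfy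
`J_γ H J_γ + T_γ ≥ λ J_γ²` as forms, then `H + ∑ T_γ ≥ (λ - ε)·Id` and the
counting function satisfies `N(λ - ε - δ, H) ≤ ∑ rank T_γ` for all
`δ > 0`. -/
theorem stmt_17
    (V : Type) [NormedAddCommGroup V] [InnerProductSpace ℂ V]
    [FiniteDimensional ℂ V]
    (G : Type) [Fintype G]
    (H : V →ₗ[ℂ] V) (hH : LinearMap.IsSymmetric H)
    (J : G → V →ₗ[ℂ] V) (hJ : ∀ γ, LinearMap.IsSymmetric (J γ))
    (hJsum : ∑ γ : G, J γ * J γ = 1)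
    (R : V →ₗ[ℂ] V) (hR : LinearMap.IsSymmetric R)
    (ε : ℝ) (hRle : ∀ f : V, (⟪R f, f⟫_ℂ).re ≤ ε * ‖f‖ ^ 2)
    (hIMS : H = ∑ γ : G, J γ * H * J γ - R)
    (lam : ℝ)
    (T : G → V →ₗ[ℂ] V) (hT : ∀ γ, LinearMap.IsSymmetric (T γ))
    (hloc : ∀ (γ : G) (f : V),
      lam * ‖J γ f‖ ^ 2 ≤ (⟪(J γ * H * J γ + T γ) f, f⟫_ℂ).re) :
    (∀ f : V, (lam - ε) * ‖f‖ ^ 2 ≤ (⟪(H + ∑ γ : G, T γ) f, f⟫_ℂ).re) ∧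
    ∀ δ : ℝ, 0 < δ →
      finrank ℂ ↥(⨆ μ : ℝ, ⨆ _ : μ ≤ lam - ε - δ,
          Module.End.eigenspace H (μ : ℂ)) ≤
        ∑ γ : G, finrank ℂ (LinearMap.range (T γ)) := by
  have hJnorm : ∀ f : V, ∑ γ : G, ‖J γ f‖ ^ 2 = ‖f‖ ^ 2 := by
    intro f
    have : ∀ γ : G, ‖J γ f‖ ^ 2 = (⟪(J γ * J γ) f, f⟫_ℂ).re := by
      intro γ
      rw [Module.End.mul_apply, hJ γ (J γ f) f, stmt17_cre]
    simp_rw [this]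
    rw [← Complex.re_sum, ← sum_inner]
    have : (∑ γ : G, (J γ * J γ) f) = f := by
      rw [← LinearMap.sum_apply, hJsum, Module.End.one_apply]
    rw [this, stmt17_cre]
  have main : ∀ f : V, (lam - ε) * ‖f‖ ^ 2 ≤ (⟪(H + ∑ γ : G, T γ) f, f⟫_ℂ).re := by
    intro f
    have expand : (⟪(H + ∑ γ : G, T γ) f, f⟫_ℂ).re
        = ∑ γ : G, (⟪(J γ * H * J γ + T γ) f, f⟫_ℂ).re - (⟪R f, f⟫_ℂ).re := by
      conv_lhs => rw [hIMS]
      simp only [LinearMap.add_apply, LinearMap.sub_apply, LinearMap.sum_apply,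
        inner_add_left, inner_sub_left, sum_inner, Complex.add_re, Complex.sub_re,
        Complex.re_sum]
      rw [Finset.sum_add_distrib]
      ring
    rw [expand]
    have h1 : ∑ γ : G, lam * ‖J γ f‖ ^ 2 ≤ ∑ γ : G, (⟪(J γ * H * J γ + T γ) f, f⟫_ℂ).re :=
      Finset.sum_le_sum fun γ _ => hloc γ f
    have h2 : ∑ γ : G, lam * ‖J γ f‖ ^ 2 = lam * ‖f‖ ^ 2 := by
      rw [← Finset.mul_sum, hJnorm]
    nlinarith [hRle f, h1]
  refine ⟨main, fun δ hδ => ?_⟩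
  set c := lam - ε - δ with hc
  set E := ⨆ μ : ℝ, ⨆ _ : μ ≤ c, Module.End.eigenspace H (μ : ℂ) with hE
  set S := ∑ γ : G, T γ with hS
  -- S is injective on E
  have hinj : Function.Injective (S.domRestrict E) := by
    rw [← LinearMap.ker_eq_bot, LinearMap.ker_eq_bot']
    intro ⟨x, hx⟩ hx0
    have hSx : S x = 0 := hx0
    have h1 : (lam - ε) * ‖x‖ ^ 2 ≤ (⟪H x, x⟫_ℂ).re := by
      have := main x
      rwa [LinearMap.add_apply, inner_add_left, Complex.add_re, hSx,
        inner_zero_left, Complex.zero_re, add_zero] at this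
    have h2 : (⟪H x, x⟫_ℂ).re ≤ c * ‖x‖ ^ 2 := stmt17_aux_inner_le H hH c x hx
    have hx0' : x = 0 := by
      by_contra hne
      have hxn : 0 < ‖x‖ := norm_pos_iff.mpr hne
      have : 0 < ‖x‖ ^ 2 := by positivity
      nlinarith
    exact Subtype.ext hx0'
  have step1 : finrank ℂ E ≤ finrank ℂ (LinearMap.range (S.domRestrict E)) :=
    LinearMap.finrank_le_finrank_of_injective
      ((LinearMap.injective_rangeRestrict_iff _).mpr hinj)
  have step2 : finrank ℂ (LinearMap.range (S.domRestrict E))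
      ≤ finrank ℂ (LinearMap.range S) :=
    Submodule.finrank_mono (by
      rintro x ⟨⟨y, hy⟩, rfl⟩
      exact ⟨y, rfl⟩)
  have step3 : finrank ℂ (LinearMap.range S) ≤ ∑ γ : G, finrank ℂ (LinearMap.range (T γ)) := by
    rw [hS]
    exact stmt17_rank_sum_le Finset.univ T
  exact le_trans (le_trans step1 step2) step3
end
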